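/- Let d_z ≥ 1, N ≥ 1 be integers and σ_w > 0. Let k : ℝ^{d_z} × ℝ^{d_z} → ℝ be a symmetric positive semidefinite kernel, fix data points z_1, …, z_N ∈ ℝ^{d_z}, and let σ_N²(z) := k(z, z) − k_v(z)ᵀ (K + σ_w² I_N)⁻¹ k_v(z) be the Gaussian process posterior variance, where K is the Gram matrix K_{ij} = k(z_i, z_j) and k_v(z) ∈ ℝ^N has entries k(z_i, z). Then σ_N²(z) ≥ 0 for all z, and for all z, z' ∈ ℝ^{d_z}, the posterior standard deviations σ_N(z) := √(σ_N²(z)) satisfy ( σ_N(z) − σ_N(z') )² ≤ k(z, z) − 2 k(z, z') + k(z', z'). -/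

import Mathlib

open Matrix

/-- `k` is a symmetric positive semidefinite kernel: every finite Gram matrix is PSD. -/
def IsPSDKernel {E : Type*} (k : E → E → ℝ) : Prop :=
  (∀ z w, k z w = k w z) ∧
    ∀ (m : ℕ) (v : Fin m → E) (c : Fin m → ℝ),
      0 ≤ ∑ i, ∑ j, c i * c j * k (v i) (v j)

/-- The Gram matrix of a kernel at points `zs`. -/
noncomputable def gramMatrix {E : Type*} (k : E → E → ℝ) {m : ℕ} (zs : Fin m → E) :
    Matrix (Fin m) (Fin m) ℝ :=
  Matrix.of fun i j => k (zs i) (zs j)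

/-- The Gaussian process posterior variance at `z` given data points `zs` and
noise variance `σw²`: `σ²(z) = k(z,z) − k_v(z)ᵀ (K + σw² I)⁻¹ k_v(z)`. -/
noncomputable def postVar {E : Type*} (k : E → E → ℝ) (σw : ℝ) {m : ℕ} (zs : Fin m → E)
    (z : E) : ℝ :=
  k z z - (fun i => k (zs i) z) ⬝ᵥ
    ((gramMatrix k zs + σw ^ 2 • (1 : Matrix (Fin m) (Fin m) ℝ))⁻¹ *ᵥ (fun i => k (zs i) z))

/-!
The posterior covariance `k_N(z, w) = k(z, w) − k_v(z)ᵀ (K + σw² I)⁻¹ k_v(w)` is again a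
positive semidefinite kernel: its Gram matrix at any points `v` is the Schur complement of
`K + σw² I` in the joint Gram matrix of `(zs, v)` with noise added on the `zs` block.
For any PSD kernel, Cauchy–Schwarz `k(z, w) ≤ √k(z, z) √k(w, w)` gives
`(√k(z, z) − √k(w, w))² ≤ k(z, z) − 2 k(z, w) + k(w, w)`. Apply this to `k_N`; the
right-hand side only grows when passing from `k_N` to `k`, because the difference
`k − k_N = k_v(·)ᵀ (K + σw² I)⁻¹ k_v(·)` is a PSD kernel too.
-/

section
variable {E : Type*} {k : E → E → ℝ} {m n : ℕ}

theorem dotProduct_gramMatrix_mulVec (v : Fin m → E) (c : Fin m → ℝ) :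
    c ⬝ᵥ (gramMatrix k v *ᵥ c) = ∑ i, ∑ j, c i * c j * k (v i) (v j) := by
  simp only [dotProduct, mulVec, gramMatrix, of_apply, Finset.mul_sum]
  exact Finset.sum_congr rfl fun i _ => Finset.sum_congr rfl fun j _ => by ring

theorem isPSDKernel_iff_posSemidef_gramMatrix :
    IsPSDKernel k ↔ ∀ (m : ℕ) (v : Fin m → E), (gramMatrix k v).PosSemidef := by
  constructor
  · intro hk m v
    refine .of_dotProduct_mulVec_nonneg ?_ fun c => ?_
    · ext i j
      exact hk.1 (v j) (v i)
    · simpa [dotProduct_gramMatrix_mulVec] using hk.2 m v c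
  · intro h
    refine ⟨fun z w => ?_, fun m v c => ?_⟩
    · simpa [gramMatrix] using (h 2 ![z, w]).isHermitian.apply 1 0
    · simpa [dotProduct_gramMatrix_mulVec] using (h m v).dotProduct_mulVec_nonneg c

namespace IsPSDKernel

theorem apply_self_nonneg (hk : IsPSDKernel k) (z : E) : 0 ≤ k z z := by
  simpa [gramMatrix] using (isPSDKernel_iff_posSemidef_gramMatrix.1 hk 1 ![z]).diag_nonneg (i := 0)

theorem sq_apply_le_mul (hk : IsPSDKernel k) (z w : E) : k z w ^ 2 ≤ k z z * k w w := by
  have h := (isPSDKernel_iff_posSemidef_gramMatrix.1 hk 2 ![z, w]).det_nonneg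
  simp only [gramMatrix, det_fin_two, of_apply, cons_val_zero, cons_val_one, cons_val_fin_one,
    hk.1 w z] at h
  linarith

theorem sqrt_sub_sqrt_sq_le (hk : IsPSDKernel k) (z w : E) :
    (√(k z z) - √(k w w)) ^ 2 ≤ k z z - 2 * k z w + k w w := by
  have hz := hk.apply_self_nonneg z
  have hw := hk.apply_self_nonneg w
  have hcs : k z w ≤ √(k z z) * √(k w w) := by
    rw [← Real.sqrt_mul hz]
    exact (le_abs_self _).trans (Real.abs_le_sqrt (hk.sq_apply_le_mul z w))
  rw [sub_sq, Real.sq_sqrt hz, Real.sq_sqrt hw]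
  linarith

end IsPSDKernel

noncomputable def crossGramMatrix (k : E → E → ℝ) (xs : Fin m → E) (ys : Fin n → E) :
    Matrix (Fin m) (Fin n) ℝ :=
  of fun i j => k (xs i) (ys j)

theorem IsPSDKernel.posSemidef_fromBlocks (hk : IsPSDKernel k) (xs : Fin m → E)
    (ys : Fin n → E) :
    (fromBlocks (gramMatrix k xs) (crossGramMatrix k xs ys) (crossGramMatrix k xs ys)ᴴ
      (gramMatrix k ys)).PosSemidef := by
  convert (isPSDKernel_iff_posSemidef_gramMatrix.1 hk _ (Fin.append xs ys)).submatrix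
    finSumFinEquiv using 1
  ext (i | i) (j | j) <;>
    simp only [gramMatrix, crossGramMatrix, conjTranspose_eq_transpose_of_trivial, transpose_apply,
      fromBlocks_apply₁₁, fromBlocks_apply₁₂, fromBlocks_apply₂₁, fromBlocks_apply₂₂,
      of_apply, submatrix_apply, finSumFinEquiv_apply_left, finSumFinEquiv_apply_right,
      Fin.append_left, Fin.append_right]
  exact hk.1 _ _

def sandwichKernel (k : E → E → ℝ) (zs : Fin m → E) (M : Matrix (Fin m) (Fin m) ℝ)
    (z w : E) : ℝ :=
  (fun i => k (zs i) z) ⬝ᵥ (M *ᵥ fun i => k (zs i) w)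

theorem gramMatrix_sandwichKernel (zs : Fin m → E) (M : Matrix (Fin m) (Fin m) ℝ)
    (v : Fin n → E) :
    gramMatrix (sandwichKernel k zs M) v =
      (crossGramMatrix k zs v)ᴴ * M * crossGramMatrix k zs v := by
  ext a b
  simp only [gramMatrix, sandwichKernel, crossGramMatrix, dotProduct, mulVec, of_apply, mul_apply,
    conjTranspose_eq_transpose_of_trivial, transpose_apply, Finset.mul_sum, Finset.sum_mul]
  rw [Finset.sum_comm]
  simp only [mul_assoc]

theorem isPSDKernel_sandwichKernel (k : E → E → ℝ) (zs : Fin m → E)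
    {M : Matrix (Fin m) (Fin m) ℝ} (hM : M.PosSemidef) : IsPSDKernel (sandwichKernel k zs M) :=
  isPSDKernel_iff_posSemidef_gramMatrix.2 fun _ v => by
    rw [gramMatrix_sandwichKernel]
    exact hM.conjTranspose_mul_mul_same _

/-- `postVar k σw zs z` unfolds to `postCov k σw zs z z`. -/
noncomputable def postCov (k : E → E → ℝ) (σw : ℝ) (zs : Fin m → E) (z w : E) : ℝ :=
  k z w - sandwichKernel k zs (gramMatrix k zs + σw ^ 2 • 1)⁻¹ z w

theorem IsPSDKernel.posDef_gramMatrix_add_smul_one (hk : IsPSDKernel k) {σw : ℝ}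
    (hσw : σw ≠ 0) (zs : Fin m → E) : (gramMatrix k zs + σw ^ 2 • 1).PosDef :=
  PosDef.posSemidef_add (isPSDKernel_iff_posSemidef_gramMatrix.1 hk m zs)
    (PosDef.one.smul (by positivity))

theorem IsPSDKernel.postCov (hk : IsPSDKernel k) {σw : ℝ} (hσw : σw ≠ 0) (zs : Fin m → E) :
    IsPSDKernel (postCov k σw zs) := by
  refine isPSDKernel_iff_posSemidef_gramMatrix.2 fun n v => ?_
  have hA := hk.posDef_gramMatrix_add_smul_one hσw zs
  let := hA.isUnit.invertible
  have hnoise : (fromBlocks (σw ^ 2 • 1 : Matrix (Fin m) (Fin m) ℝ) 0 0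
      (0 : Matrix (Fin n) (Fin n) ℝ)).PosSemidef := by
    rw [smul_one_eq_diagonal, ← diagonal_zero, fromBlocks_diagonal]
    exact .diagonal fun i => by cases i <;> simp [sq_nonneg]
  have := (hA.fromBlocks₁₁ (crossGramMatrix k zs v) (gramMatrix k v)).1 (by
    simpa [fromBlocks_add] using (hk.posSemidef_fromBlocks zs v).add hnoise)
  rwa [← gramMatrix_sandwichKernel] at this

end

theorem stmt_8_general (dz N : ℕ) (σw : ℝ) (hσw : 0 < σw)
    (k : EuclideanSpace ℝ (Fin dz) → EuclideanSpace ℝ (Fin dz) → ℝ)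
    (hk : IsPSDKernel k)
    (zs : Fin N → EuclideanSpace ℝ (Fin dz)) :
    (∀ z : EuclideanSpace ℝ (Fin dz), 0 ≤ postVar k σw zs z) ∧
      ∀ z z' : EuclideanSpace ℝ (Fin dz),
        (Real.sqrt (postVar k σw zs z) - Real.sqrt (postVar k σw zs z')) ^ 2 ≤
          k z z - 2 * k z z' + k z' z' := by
  have hpost := hk.postCov hσw.ne' zs
  have hexplained := isPSDKernel_sandwichKernel k zs
    (hk.posDef_gramMatrix_add_smul_one hσw.ne' zs).inv.posSemidef
  refine ⟨hpost.apply_self_nonneg, fun z z' => (hpost.sqrt_sub_sqrt_sq_le z z').trans ?_⟩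
  have := (sq_nonneg _).trans (hexplained.sqrt_sub_sqrt_sq_le z z')
  simp only [postCov]
  linarith

/-- Nonnegativity of the GP posterior variance and the Hölder-type bound
`(σ_N(z) − σ_N(z'))² ≤ k(z,z) − 2 k(z,z') + k(z',z')` for the posterior standard deviations. -/
theorem stmt_8 (dz N : ℕ) (hdz : 1 ≤ dz) (hN : 1 ≤ N) (σw : ℝ) (hσw : 0 < σw)
    (k : EuclideanSpace ℝ (Fin dz) → EuclideanSpace ℝ (Fin dz) → ℝ)
    (hk : IsPSDKernel k)
    (zs : Fin N → EuclideanSpace ℝ (Fin dz)) :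
    (∀ z : EuclideanSpace ℝ (Fin dz), 0 ≤ postVar k σw zs z) ∧
      ∀ z z' : EuclideanSpace ℝ (Fin dz),
        (Real.sqrt (postVar k σw zs z) - Real.sqrt (postVar k σw zs z')) ^ 2 ≤
          k z z - 2 * k z z' + k z' z' :=
  stmt_8_general dz N σw hσw k hk zs
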